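/- Let d and g be natural numbers with (d,g) = (13,14). Then there are no integers a, b and natural numbers m with 1 ≤ m ≤ 18 - d such that 6a + 13b = m and 6a^2 + 26ab + 26b^2 = -2 + 2*0, i.e., such that the class aH + bC on a degree-6 K3 surface with H^2=6, H·C=13, C^2=2g-2=26 represents a rational curve of degree m (that is, 6a^2 + 2·13·ab + 26·b^2 = -2 and 6a + 13b = m), except for (a,b) = (-2,1) with m = 1. -/
import Mathlib


/-- For (d,g) = (13,14): the only solution (a,b,m) with 1 ≤ m ≤ 18 - d = 5,
6a + 13b = m and 6a² + 2·13·ab + 26b² = -2 is (a,b,m) = (-2,1,1). -/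
theorem stmt2 (d g : ℤ) (hd : d = 13) (hg : g = 14) :
    ∀ a b : ℤ, ∀ m : ℤ, 1 ≤ m → m ≤ 18 - d →
      6 * a + d * b = m →
      6 * a ^ 2 + 2 * d * a * b + (2 * g - 2) * b ^ 2 = -2 →
      a = -2 ∧ b = 1 ∧ m = 1 := by
  subst hd hg
  intro a b m h1 h5 hlin hquad
  have key : 13 * b ^ 2 = m ^ 2 + 12 := by nlinarith
  interval_cases m <;> [skip; omega; omega; omega; omega]
  have hb2 : b ^ 2 = 1 := by omega
  have hbl : -1 ≤ b ∧ b ≤ 1 := by constructor <;> nlinarith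
  obtain ⟨hl, hr⟩ := hbl
  interval_cases b <;> omega
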